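/- Contraction estimate: Under the assumptions above, let 0 < m ≤ f ≤ M on [u₀−h, u₀+h], let L be a Lipschitz constant of f on this interval, and K_* ≤ K ≤ K^* on [0,1/2] with K_* > 0. Then for any two continuous functions u₁, u₂ : [0,h] → [u₀−h, u₀+h], the operator (Gu)(r) = u₀ + ∫₀^r (t^{2−N}/(N−1)) (∫₀^t Nτ^{N−1}K(τ)f(u(τ))dτ)^{(N−1)/N} dt satisfies ‖Gu₁ − Gu₂‖_∞ ≤ (h²/(2N)) (K_* m)^{−1/N} K^* L ‖u₁ − u₂‖_∞. -/

import Mathlib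

/-!
Write `F_u(t) = ∫₀ᵗ N τ^(N-1) K(τ) f(u(τ)) dτ`. Comparing with `∫₀ᵗ N τ^(N-1) dτ = t^N` gives
`F_u(t) ≥ K_* m t^N` and `|F_{u₁}(t) - F_{u₂}(t)| ≤ K^* L ‖u₁ - u₂‖ t^N`. Since `x ↦ x^((N-1)/N)`
is `((N-1)/N) c^(-1/N)`-Lipschitz on `[c, ∞)`, taking `c = K_* m t^N` shows that the integrands of
`Gu₁` and `Gu₂` differ by at most `(K_* m)^(-1/N) K^* L ‖u₁ - u₂‖ t / N`, and integrating `t` over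
`[0, r] ⊆ [0, h]` produces the factor `h² / 2`.
-/

open Set Filter Topology intervalIntegral
open MeasureTheory (volume ae_of_all)

theorem Real.abs_rpow_sub_rpow_le {α a b c : ℝ} (hα0 : 0 ≤ α) (hα1 : α ≤ 1) (hc : 0 < c)
    (ha : c ≤ a) (hb : c ≤ b) : |a ^ α - b ^ α| ≤ α * c ^ (α - 1) * |a - b| := by
  have hderiv : ∀ x ∈ Ici c, HasDerivWithinAt (· ^ α) (α * x ^ (α - 1)) (Ici c) x :=
    fun x hx => (Real.hasDerivAt_rpow_const (Or.inl (hc.trans_le hx).ne')).hasDerivWithinAt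
  have hbound : ∀ x ∈ Ici c, ‖α * x ^ (α - 1)‖ ≤ α * c ^ (α - 1) := fun x hx => by
    rw [Real.norm_of_nonneg (mul_nonneg hα0 (Real.rpow_nonneg (hc.le.trans hx) _))]
    exact mul_le_mul_of_nonneg_left (Real.rpow_le_rpow_of_nonpos hc hx (by linarith)) hα0
  exact Convex.norm_image_sub_le_of_norm_hasDerivWithin_le hderiv hbound (convex_Ici c) hb ha

section PowerWeight

variable {n t : ℝ}

theorem integral_mul_rpow_sub_one (hn : 0 < n) (t : ℝ) :
    ∫ τ in (0:ℝ)..t, n * τ ^ (n - 1) = t ^ n := by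
  rw [integral_const_mul, integral_rpow (Or.inl (by linarith)), sub_add_cancel,
    Real.zero_rpow hn.ne', sub_zero, mul_div_cancel₀ _ hn.ne']

theorem intervalIntegrable_mul_rpow_sub_one (hn : 0 < n) (c a b : ℝ) :
    IntervalIntegrable (fun τ => c * (n * τ ^ (n - 1))) volume a b :=
  ((intervalIntegrable_rpow' (by linarith)).const_mul n).const_mul c

theorem mul_rpow_le_integral_of_le {φ : ℝ → ℝ} {A : ℝ} (hn : 0 < n) (ht : 0 ≤ t)
    (hφ : IntervalIntegrable φ volume 0 t) (hA : ∀ τ ∈ Icc 0 t, A * (n * τ ^ (n - 1)) ≤ φ τ) :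
    A * t ^ n ≤ ∫ τ in (0:ℝ)..t, φ τ := by
  rw [← integral_mul_rpow_sub_one hn t, ← integral_const_mul]
  exact integral_mono_on ht (intervalIntegrable_mul_rpow_sub_one hn A 0 t) hφ hA

theorem abs_integral_le_mul_rpow {φ : ℝ → ℝ} {B : ℝ} (hn : 0 < n) (ht : 0 ≤ t)
    (hB : ∀ τ ∈ Ioc 0 t, |φ τ| ≤ B * (n * τ ^ (n - 1))) :
    |∫ τ in (0:ℝ)..t, φ τ| ≤ B * t ^ n := by
  rw [← integral_mul_rpow_sub_one hn t, ← integral_const_mul]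
  exact norm_integral_le_of_norm_le ht
    (ae_of_all _ fun τ hτ => (Real.norm_eq_abs _).trans_le (hB τ hτ))
    (intervalIntegrable_mul_rpow_sub_one hn B 0 t)

theorem rpow_two_sub_mul_rpow_sub_one (ht : 0 < t) : t ^ (2 - n) * t ^ (n - 1) = t := by
  rw [← Real.rpow_add ht, show 2 - n + (n - 1) = 1 by ring, Real.rpow_one]

end PowerWeight

/-- For radial `K` and `g` on `ℝⁿ`, this is `∫_{B_t} K g` divided by the volume of the unit ball. -/
noncomputable def radialMass (n : ℝ) (K g : ℝ → ℝ) (t : ℝ) : ℝ :=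
  ∫ τ in (0:ℝ)..t, n * τ ^ (n - 1) * K τ * g τ

noncomputable def radialIntegrand (n : ℝ) (F : ℝ → ℝ) (t : ℝ) : ℝ :=
  t ^ (2 - n) / (n - 1) * F t ^ ((n - 1) / n)

section Radial

variable {n h t a b d : ℝ} {K g g₁ g₂ F F₁ F₂ : ℝ → ℝ}

theorem continuousOn_radialDensity {s : Set ℝ} (hn : 1 ≤ n) (hK : ContinuousOn K s)
    (hg : ContinuousOn g s) : ContinuousOn (fun τ => n * τ ^ (n - 1) * K τ * g τ) s :=
  ((continuous_const.mul (Real.continuous_rpow_const (by linarith))).continuousOn.mul hK).mul hg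

theorem intervalIntegrable_radialDensity (hn : 1 ≤ n) (ht : 0 ≤ t)
    (hK : ContinuousOn K (Icc 0 t)) (hg : ContinuousOn g (Icc 0 t)) :
    IntervalIntegrable (fun τ => n * τ ^ (n - 1) * K τ * g τ) volume 0 t :=
  (continuousOn_radialDensity hn hK hg).intervalIntegrable_of_Icc ht

theorem continuousOn_radialMass (hn : 1 ≤ n) (hh : 0 ≤ h) (hK : ContinuousOn K (Icc 0 h))
    (hg : ContinuousOn g (Icc 0 h)) : ContinuousOn (radialMass n K g) (Icc 0 h) := by
  have := continuousOn_primitive_interval' (intervalIntegrable_radialDensity hn hh hK hg)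
    left_mem_uIcc
  rwa [uIcc_of_le hh] at this

theorem mul_rpow_le_radialMass (hn : 1 ≤ n) (ht : 0 ≤ t) (hK : ContinuousOn K (Icc 0 t))
    (hg : ContinuousOn g (Icc 0 t)) (ha : ∀ τ ∈ Icc 0 t, a ≤ K τ * g τ) :
    a * t ^ n ≤ radialMass n K g t := by
  refine mul_rpow_le_integral_of_le (by linarith) ht
    (intervalIntegrable_radialDensity hn ht hK hg) fun τ hτ => ?_
  have hw : 0 ≤ n * τ ^ (n - 1) := by have := Real.rpow_nonneg hτ.1 (n - 1); positivity
  calc a * (n * τ ^ (n - 1)) ≤ K τ * g τ * (n * τ ^ (n - 1)) :=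
        mul_le_mul_of_nonneg_right (ha τ hτ) hw
    _ = n * τ ^ (n - 1) * K τ * g τ := by ring

theorem abs_radialMass_le (hn : 0 < n) (ht : 0 ≤ t) (hb : ∀ τ ∈ Ioc 0 t, |K τ * g τ| ≤ b) :
    |radialMass n K g t| ≤ b * t ^ n := by
  refine abs_integral_le_mul_rpow hn ht fun τ hτ => ?_
  have hw : 0 ≤ n * τ ^ (n - 1) := by have := Real.rpow_nonneg hτ.1.le (n - 1); positivity
  calc |n * τ ^ (n - 1) * K τ * g τ| = n * τ ^ (n - 1) * |K τ * g τ| := by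
        rw [mul_assoc, abs_mul, abs_of_nonneg hw]
    _ ≤ n * τ ^ (n - 1) * b := mul_le_mul_of_nonneg_left (hb τ hτ) hw
    _ = b * (n * τ ^ (n - 1)) := mul_comm _ _

theorem radialMass_sub (hn : 1 ≤ n) (ht : 0 ≤ t) (hK : ContinuousOn K (Icc 0 t))
    (hg₁ : ContinuousOn g₁ (Icc 0 t)) (hg₂ : ContinuousOn g₂ (Icc 0 t)) :
    radialMass n K g₁ t - radialMass n K g₂ t = radialMass n K (g₁ - g₂) t := by
  rw [radialMass, radialMass, ← integral_sub (intervalIntegrable_radialDensity hn ht hK hg₁)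
    (intervalIntegrable_radialDensity hn ht hK hg₂)]
  simp only [radialMass, Pi.sub_apply, mul_sub]

theorem continuousOn_radialIntegrand (hn : 1 ≤ n) (hF : ContinuousOn F (Ioc 0 h)) :
    ContinuousOn (radialIntegrand n F) (Ioc 0 h) := by
  refine ContinuousOn.mul (fun t ht => ?_) (hF.rpow_const fun _ _ => Or.inr ?_)
  · exact ((Real.continuousAt_rpow_const t _ (Or.inl ht.1.ne')).div_const _).continuousWithinAt
  · exact div_nonneg (by linarith) (by linarith)

theorem intervalIntegrable_radialIntegrand (hn : 1 < n) (hh : 0 ≤ h)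
    (hF : ContinuousOn F (Icc 0 h)) (hFb : ∀ t ∈ Ioc 0 h, |F t| ≤ b * t ^ n) :
    IntervalIntegrable (radialIntegrand n F) volume 0 h := by
  set α := (n - 1) / n
  have hα : 0 ≤ α := div_nonneg (by linarith) (by linarith)
  refine (((continuous_const (y := |b| ^ α / (n - 1))).mul continuous_id).intervalIntegrable
    0 h).mono_fun' ?_ ?_
  · rw [uIoc_of_le hh]
    exact (continuousOn_radialIntegrand hn.le (hF.mono Ioc_subset_Icc_self)).aestronglyMeasurable
      measurableSet_Ioc
  · filter_upwards [MeasureTheory.ae_restrict_mem measurableSet_uIoc] with t ht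
    rw [uIoc_of_le hh] at ht
    have hw : 0 ≤ t ^ (2 - n) / (n - 1) := div_nonneg (Real.rpow_nonneg ht.1.le _) (by linarith)
    have hF' : |F t| ^ α ≤ |b| ^ α * t ^ (n - 1) := by
      calc |F t| ^ α ≤ (|b| * t ^ n) ^ α := Real.rpow_le_rpow (abs_nonneg _)
            ((hFb t ht).trans (mul_le_mul_of_nonneg_right (le_abs_self b)
              (Real.rpow_nonneg ht.1.le n))) hα
        _ = |b| ^ α * t ^ (n - 1) := by
            rw [Real.mul_rpow (abs_nonneg b) (Real.rpow_nonneg ht.1.le n), ← Real.rpow_mul ht.1.le,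
              mul_div_cancel₀ _ (by linarith : n ≠ 0)]
    calc ‖radialIntegrand n F t‖ = t ^ (2 - n) / (n - 1) * |F t ^ α| := by
          rw [Real.norm_eq_abs, radialIntegrand, abs_mul, abs_of_nonneg hw]
      _ ≤ t ^ (2 - n) / (n - 1) * (|b| ^ α * t ^ (n - 1)) :=
          mul_le_mul_of_nonneg_left ((Real.abs_rpow_le_abs_rpow _ _).trans hF') hw
      _ = |b| ^ α / (n - 1) * (t ^ (2 - n) * t ^ (n - 1)) := by ring
      _ = |b| ^ α / (n - 1) * t := by rw [rpow_two_sub_mul_rpow_sub_one ht.1]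

theorem intervalIntegrable_radialIntegrand_radialMass (hn : 1 < n) (hh : 0 ≤ h)
    (hK : ContinuousOn K (Icc 0 h)) (hg : ContinuousOn g (Icc 0 h)) :
    IntervalIntegrable (radialIntegrand n (radialMass n K g)) volume 0 h := by
  obtain ⟨b, hb⟩ := isCompact_Icc.exists_bound_of_continuousOn (hK.mul hg)
  exact intervalIntegrable_radialIntegrand hn hh (continuousOn_radialMass hn.le hh hK hg)
    fun t ht => abs_radialMass_le (by linarith) ht.1.le
      fun τ hτ => hb τ ⟨hτ.1.le, hτ.2.trans ht.2⟩

theorem abs_radialIntegrand_sub_le (hn : 1 < n) (ht : 0 < t) (ha : 0 < a)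
    (h₁ : a * t ^ n ≤ F₁ t) (h₂ : a * t ^ n ≤ F₂ t) (hd : |F₁ t - F₂ t| ≤ d * t ^ n) :
    |radialIntegrand n F₁ t - radialIntegrand n F₂ t| ≤ a ^ (-1 / n) * d / n * t := by
  have hn0 : n ≠ 0 := by linarith
  have hn1 : n - 1 ≠ 0 := by linarith
  have hw : 0 ≤ t ^ (2 - n) / (n - 1) := div_nonneg (Real.rpow_nonneg ht.le _) (by linarith)
  have hα : (n - 1) / n - 1 = -1 / n := by field_simp; ring
  have htn : 0 < t ^ n := Real.rpow_pos_of_pos ht n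
  have hc : 0 < a * t ^ n := mul_pos ha htn
  have hroot := Real.abs_rpow_sub_rpow_le (α := (n - 1) / n)
    (div_nonneg (by linarith) (by linarith)) (div_le_one_of_le₀ (by linarith) (by linarith))
    hc h₁ h₂
  rw [hα] at hroot
  have hpow : (a * t ^ n) ^ (-1 / n) = a ^ (-1 / n) * t ^ (-1 : ℝ) := by
    rw [Real.mul_rpow ha.le htn.le, ← Real.rpow_mul ht.le, mul_div_cancel₀ _ hn0]
  have hts : t ^ (2 - n) * t ^ (-1 : ℝ) * t ^ n = t := by
    rw [← Real.rpow_add ht, ← Real.rpow_add ht, show 2 - n + -1 + n = 1 by ring, Real.rpow_one]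
  calc |radialIntegrand n F₁ t - radialIntegrand n F₂ t|
      = t ^ (2 - n) / (n - 1) * |F₁ t ^ ((n - 1) / n) - F₂ t ^ ((n - 1) / n)| := by
        rw [radialIntegrand, radialIntegrand, ← mul_sub, abs_mul, abs_of_nonneg hw]
    _ ≤ t ^ (2 - n) / (n - 1) * ((n - 1) / n * (a * t ^ n) ^ (-1 / n) * (d * t ^ n)) := by
        refine mul_le_mul_of_nonneg_left (hroot.trans (mul_le_mul_of_nonneg_left hd ?_)) hw
        exact mul_nonneg (div_nonneg (by linarith) (by linarith)) (Real.rpow_nonneg hc.le _)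
    _ = (n - 1) / (n - 1) * a ^ (-1 / n) * d / n * (t ^ (2 - n) * t ^ (-1 : ℝ) * t ^ n) := by
        rw [hpow]; ring
    _ = a ^ (-1 / n) * d / n * t := by rw [div_self hn1, hts, one_mul]

theorem abs_integral_radialIntegrand_sub_le {r : ℝ} (hn : 1 < n) (hr : r ∈ Icc 0 h) (ha : 0 < a)
    (hK : ContinuousOn K (Icc 0 h)) (hg₁ : ContinuousOn g₁ (Icc 0 h))
    (hg₂ : ContinuousOn g₂ (Icc 0 h)) (ha₁ : ∀ τ ∈ Icc 0 h, a ≤ K τ * g₁ τ)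
    (ha₂ : ∀ τ ∈ Icc 0 h, a ≤ K τ * g₂ τ) (hd : ∀ τ ∈ Icc 0 h, |K τ * (g₁ τ - g₂ τ)| ≤ d) :
    |(∫ t in (0:ℝ)..r, radialIntegrand n (radialMass n K g₁) t) -
        ∫ t in (0:ℝ)..r, radialIntegrand n (radialMass n K g₂) t| ≤
      h ^ 2 / (2 * n) * a ^ (-1 / n) * d := by
  have hh : 0 ≤ h := hr.1.trans hr.2
  have hd0 : 0 ≤ d := (abs_nonneg _).trans (hd 0 ⟨le_rfl, hh⟩)
  have hsub : uIcc 0 r ⊆ uIcc 0 h := uIcc_subset_uIcc_left (by rwa [uIcc_of_le hh])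
  set C := a ^ (-1 / n) * d / n
  have hC : 0 ≤ C := by have := Real.rpow_nonneg ha.le (-1 / n); positivity
  have hpoint : ∀ t ∈ Ioc 0 r, |radialIntegrand n (radialMass n K g₁) t -
      radialIntegrand n (radialMass n K g₂) t| ≤ C * t := by
    intro t ht
    have htI : Icc 0 t ⊆ Icc 0 h := Icc_subset_Icc_right (ht.2.trans hr.2)
    refine abs_radialIntegrand_sub_le hn ht.1 ha
      (mul_rpow_le_radialMass hn.le ht.1.le (hK.mono htI) (hg₁.mono htI)
        fun τ hτ => ha₁ τ (htI hτ))
      (mul_rpow_le_radialMass hn.le ht.1.le (hK.mono htI) (hg₂.mono htI)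
        fun τ hτ => ha₂ τ (htI hτ)) ?_
    rw [radialMass_sub hn.le ht.1.le (hK.mono htI) (hg₁.mono htI) (hg₂.mono htI)]
    exact abs_radialMass_le (by linarith) ht.1.le fun τ hτ => hd τ (htI (Ioc_subset_Icc_self hτ))
  rw [← integral_sub ((intervalIntegrable_radialIntegrand_radialMass hn hh hK hg₁).mono_set hsub)
    ((intervalIntegrable_radialIntegrand_radialMass hn hh hK hg₂).mono_set hsub)]
  calc _ ≤ ∫ t in (0:ℝ)..r, C * t := by
        exact norm_integral_le_of_norm_le hr.1
          (ae_of_all _ fun t ht => (Real.norm_eq_abs _).trans_le (hpoint t ht))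
          ((continuous_const.mul continuous_id).intervalIntegrable _ _)
    _ = C * (r ^ 2 / 2) := by rw [integral_const_mul, integral_id]; ring
    _ ≤ C * (h ^ 2 / 2) := by gcongr; exact hr.1; exact hr.2
    _ = h ^ 2 / (2 * n) * a ^ (-1 / n) * d := by ring

end Radial

theorem stmt_18_general (N : ℕ) (hN : 2 ≤ N) (u₀ h : ℝ)
    (hh0 : 0 < h) (hh : h < 1 / 2)
    (K : ℝ → ℝ) (hKcont : ContinuousOn K (Ico 0 1))
    (f : ℝ → ℝ)
    (m M L Kst Ksup : ℝ)
    (hmpos : 0 < m)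
    (hfL : 0 ≤ L ∧ ∀ x ∈ Icc (u₀ - h) (u₀ + h), ∀ y ∈ Icc (u₀ - h) (u₀ + h),
      |f x - f y| ≤ L * |x - y|)
    (hfbound : ∀ x ∈ Icc (u₀ - h) (u₀ + h), m ≤ f x ∧ f x ≤ M)
    (hKst : 0 < Kst) (hKbound : ∀ τ ∈ Icc (0:ℝ) (1/2), Kst ≤ K τ ∧ K τ ≤ Ksup)
    (u₁ u₂ : ℝ → ℝ)
    (h₁cont : ContinuousOn u₁ (Icc 0 h)) (h₂cont : ContinuousOn u₂ (Icc 0 h))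
    (h₁mem : ∀ r ∈ Icc (0:ℝ) h, u₁ r ∈ Icc (u₀ - h) (u₀ + h))
    (h₂mem : ∀ r ∈ Icc (0:ℝ) h, u₂ r ∈ Icc (u₀ - h) (u₀ + h))
    (Gop : (ℝ → ℝ) → ℝ → ℝ)
    (hGop : ∀ u r, Gop u r = u₀ + ∫ t in (0:ℝ)..r, t ^ ((2:ℝ) - N) / ((N:ℝ) - 1) *
      (∫ τ in (0:ℝ)..t, (N:ℝ) * τ ^ ((N:ℝ) - 1) * K τ * f (u τ)) ^ (((N:ℝ) - 1) / N)) :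
    sSup ((fun r => |Gop u₁ r - Gop u₂ r|) '' Icc 0 h) ≤
      h ^ 2 / (2 * N) * (Kst * m) ^ (-(1:ℝ) / N) * Ksup * L *
        sSup ((fun r => |u₁ r - u₂ r|) '' Icc 0 h) := by
  obtain ⟨hL, hfLip⟩ := hfL
  have hN1 : (1:ℝ) < N := by exact_mod_cast hN
  set D := sSup ((fun r => |u₁ r - u₂ r|) '' Icc 0 h)
  have hD : ∀ τ ∈ Icc 0 h, |u₁ τ - u₂ τ| ≤ D := fun τ hτ =>
    le_csSup (isCompact_Icc.image_of_continuousOn (h₁cont.sub h₂cont).abs).bddAbove ⟨τ, hτ, rfl⟩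
  have hKh : ∀ τ ∈ Icc 0 h, Kst ≤ K τ ∧ K τ ≤ Ksup := fun τ hτ =>
    hKbound τ ⟨hτ.1, by linarith [hτ.2]⟩
  have hf : ContinuousOn f (Icc (u₀ - h) (u₀ + h)) :=
    (LipschitzOnWith.of_dist_le' fun x hx y hy => by
      simpa only [Real.dist_eq] using hfLip x hx y hy).continuousOn
  have hK : ContinuousOn K (Icc 0 h) := hKcont.mono fun τ hτ => ⟨hτ.1, by linarith [hτ.2]⟩
  have hlow : ∀ u : ℝ → ℝ, (∀ r ∈ Icc (0:ℝ) h, u r ∈ Icc (u₀ - h) (u₀ + h)) →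
      ∀ τ ∈ Icc 0 h, Kst * m ≤ K τ * f (u τ) := fun u hu τ hτ =>
    mul_le_mul (hKh τ hτ).1 (hfbound _ (hu τ hτ)).1 hmpos.le (hKst.le.trans (hKh τ hτ).1)
  have hdiff : ∀ τ ∈ Icc 0 h, |K τ * (f (u₁ τ) - f (u₂ τ))| ≤ Ksup * (L * D) := fun τ hτ => by
    rw [abs_mul, abs_of_pos (hKst.trans_le (hKh τ hτ).1)]
    exact mul_le_mul (hKh τ hτ).2 ((hfLip _ (h₁mem τ hτ) _ (h₂mem τ hτ)).trans
      (mul_le_mul_of_nonneg_left (hD τ hτ) hL)) (abs_nonneg _)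
      (hKst.le.trans ((hKh τ hτ).1.trans (hKh τ hτ).2))
  refine csSup_le ((nonempty_Icc.2 hh0.le).image _) ?_
  rintro _ ⟨r, hr, rfl⟩
  dsimp only
  rw [hGop, hGop, add_sub_add_left_eq_sub]
  exact (abs_integral_radialIntegrand_sub_le hN1 hr (mul_pos hKst hmpos) hK
    (hf.comp h₁cont h₁mem) (hf.comp h₂cont h₂mem) (hlow u₁ h₁mem) (hlow u₂ h₂mem) hdiff).trans_eq
    (by ring)

/-- Contraction estimate:
‖Gu₁ − Gu₂‖_∞ ≤ (h²/(2N))·(K_* m)^{−1/N}·K^*·L·‖u₁ − u₂‖_∞. -/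
theorem stmt_18 (N : ℕ) (hN : 2 ≤ N) (u₀ h : ℝ)
    (hh0 : 0 < h) (hh : h < 1 / 2) (hu₀h : 0 < u₀ - h)
    (K : ℝ → ℝ) (hKpos : ∀ τ ∈ Ico (0:ℝ) 1, 0 < K τ) (hKcont : ContinuousOn K (Ico 0 1))
    (f : ℝ → ℝ) (hfmono : MonotoneOn f (Ioi 0))
    (m M L Kst Ksup : ℝ)
    (hm : m = f (u₀ - h)) (hmpos : 0 < m) (hM : M = f (u₀ + h))
    (hfL : 0 ≤ L ∧ ∀ x ∈ Icc (u₀ - h) (u₀ + h), ∀ y ∈ Icc (u₀ - h) (u₀ + h),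
      |f x - f y| ≤ L * |x - y|)
    (hfbound : ∀ x ∈ Icc (u₀ - h) (u₀ + h), m ≤ f x ∧ f x ≤ M)
    (hKst : 0 < Kst) (hKbound : ∀ τ ∈ Icc (0:ℝ) (1/2), Kst ≤ K τ ∧ K τ ≤ Ksup)
    (u₁ u₂ : ℝ → ℝ)
    (h₁cont : ContinuousOn u₁ (Icc 0 h)) (h₂cont : ContinuousOn u₂ (Icc 0 h))
    (h₁mem : ∀ r ∈ Icc (0:ℝ) h, u₁ r ∈ Icc (u₀ - h) (u₀ + h))
    (h₂mem : ∀ r ∈ Icc (0:ℝ) h, u₂ r ∈ Icc (u₀ - h) (u₀ + h))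
    (Gop : (ℝ → ℝ) → ℝ → ℝ)
    (hGop : ∀ u r, Gop u r = u₀ + ∫ t in (0:ℝ)..r, t ^ ((2:ℝ) - N) / ((N:ℝ) - 1) *
      (∫ τ in (0:ℝ)..t, (N:ℝ) * τ ^ ((N:ℝ) - 1) * K τ * f (u τ)) ^ (((N:ℝ) - 1) / N)) :
    sSup ((fun r => |Gop u₁ r - Gop u₂ r|) '' Icc 0 h) ≤
      h ^ 2 / (2 * N) * (Kst * m) ^ (-(1:ℝ) / N) * Ksup * L *
        sSup ((fun r => |u₁ r - u₂ r|) '' Icc 0 h) :=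
  stmt_18_general N hN u₀ h hh0 hh K hKcont f m M L Kst Ksup hmpos hfL hfbound hKst hKbound u₁ u₂
    h₁cont h₂cont h₁mem h₂mem Gop hGop
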